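/- arXiv:1708.03570 — 2 statements merged into one kernel-verified Lean document; each statement's English description precedes it below -/
import Mathlib

section
/- The one-step map Φ_h of the tangential momentum method q_{n+1/2} = q_n + (h/2)p_n, p_{n+1} = p_n − h∇V(q_{n+1/2}) − hG(q_{n+1/2})ᵀλ, q_{n+1} = q_{n+1/2} + (h/2)p_{n+1}, with λ chosen so that G(q_{n+1})p_{n+1} = 0, is symmetric: assuming G(q_n)p_n = 0, exchanging h ↦ −h and (q_n,p_n) ↔ (q_{n+1},p_{n+1}) in the defining equations yields the same set of equations, i.e. Φ_{−h}⁻¹ = Φ_h on the set {(q,p) : G(q)p = 0}. -/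
open Matrix

/-- One step of the tangential momentum method: `q_{n+1/2} = q_n + (h/2)p_n`,
`p_{n+1} = p_n - h∇V(q_{n+1/2}) - hG(q_{n+1/2})ᵀλ`,
`q_{n+1} = q_{n+1/2} + (h/2)p_{n+1}`, with the tangency constraints
`G(q_n)p_n = 0` and `G(q_{n+1})p_{n+1} = 0`. -/
def TangentialStep {N L : ℕ}
    (G : (Fin N → ℝ) → Matrix (Fin L) (Fin N) ℝ)
    (gradV : (Fin N → ℝ) → (Fin N → ℝ))
    (h : ℝ) (z z' : (Fin N → ℝ) × (Fin N → ℝ)) : Prop :=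
  ∃ lam : Fin L → ℝ,
    G z.1 *ᵥ z.2 = 0 ∧
    z'.2 = z.2 - h • gradV (z.1 + (h/2) • z.2)
             - h • ((G (z.1 + (h/2) • z.2))ᵀ *ᵥ lam) ∧
    z'.1 = (z.1 + (h/2) • z.2) + (h/2) • z'.2 ∧
    G z'.1 *ᵥ z'.2 = 0

/-- The backward half step from `(q_{n+1}, p_{n+1})` with step `-h` lands on the same
midpoint `q_{n+1/2}`, so the force and the constraint matrix are evaluated at the same
point in both directions and the same multiplier `λ` reverses the momentum update. -/
theorem TangentialStep.symm {N L : ℕ}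
    {G : (Fin N → ℝ) → Matrix (Fin L) (Fin N) ℝ} {gradV : (Fin N → ℝ) → (Fin N → ℝ)}
    {h : ℝ} {z z' : (Fin N → ℝ) × (Fin N → ℝ)} (H : TangentialStep G gradV h z z') :
    TangentialStep G gradV (-h) z' z := by
  obtain ⟨lam, tangent, momentum, position, tangent'⟩ := H
  have midpoint : z'.1 + (-h / 2) • z'.2 = z.1 + (h / 2) • z.2 := by
    rw [position]; module
  refine ⟨lam, tangent', ?_, ?_, tangent⟩
  · rw [midpoint, momentum]; module
  · rw [midpoint]; module

/-- the tangential momentum method is symmetric: exchanging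
`h ↦ -h` and `(q_n,p_n) ↔ (q_{n+1},p_{n+1})` yields the same set of equations,
i.e. `Φ_{-h}⁻¹ = Φ_h` on the set `{(q,p) : G(q)p = 0}`. -/
theorem tangential_momentum_method_symmetric
    {N L : ℕ}
    (G : (Fin N → ℝ) → Matrix (Fin L) (Fin N) ℝ)
    (gradV : (Fin N → ℝ) → (Fin N → ℝ))
    (h : ℝ) (z z' : (Fin N → ℝ) × (Fin N → ℝ)) :
    TangentialStep G gradV h z z' ↔ TangentialStep G gradV (-h) z' z :=
  ⟨TangentialStep.symm, fun H => neg_neg h ▸ H.symm⟩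
end

section
/- A symmetric one-step method of (at least) first order has even order: if Φ_h is a consistent one-step method for ẏ = f(y) satisfying Φ_{−h} ∘ Φ_h = id (symmetry) and having local error O(h²), then its local error is in fact O(h³), i.e. the method is of order at least 2. -/
open Asymptotics Filter
open scoped ContDiff


lemma aux_isBigO_succ {V : Type*} [NormedAddCommGroup V] [NormedSpace ℝ V]
    {v : ℝ → V} {k : ℕ} (hd : ∀ x : ℝ, DifferentiableAt ℝ v x) (h0 : v 0 = 0)
    (hO : deriv v =O[nhds 0] fun h => h ^ k) :
    v =O[nhds 0] fun h => h ^ (k + 1) := by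
  rw [isBigO_iff] at hO
  obtain ⟨C, hC⟩ := hO
  rw [Metric.eventually_nhds_iff] at hC
  obtain ⟨ε, hε, hball⟩ := hC
  rw [isBigO_iff]
  refine ⟨|C|, ?_⟩
  rw [Metric.eventually_nhds_iff]
  refine ⟨ε, hε, fun {h} hh => ?_⟩
  simp only [dist_zero_right, Real.norm_eq_abs] at hh
  have key : ∀ x ∈ Set.uIcc (0:ℝ) h, ‖deriv v x‖ ≤ |C| * |h| ^ k := by
    intro x hx
    have hxh : |x| ≤ |h| := by
      rcases Set.mem_uIcc.1 hx with ⟨h1, h2⟩ | ⟨h1, h2⟩ <;> rw [abs_le] <;>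
        constructor <;> nlinarith [abs_nonneg h, le_abs_self h, neg_abs_le h]
    have hxε : dist x 0 < ε := by
      simp only [dist_zero_right, Real.norm_eq_abs]; exact lt_of_le_of_lt hxh hh
    calc ‖deriv v x‖ ≤ C * ‖x ^ k‖ := hball hxε
      _ ≤ |C| * |h| ^ k := by
          rw [norm_pow, Real.norm_eq_abs]
          have h1 : |x| ^ k ≤ |h| ^ k := pow_le_pow_left₀ (abs_nonneg x) hxh k
          have h2 : C * |x| ^ k ≤ |C| * |x| ^ k :=
            mul_le_mul_of_nonneg_right (le_abs_self C) (by positivity)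
          nlinarith [abs_nonneg C, pow_nonneg (abs_nonneg x) k]
  have := Convex.norm_image_sub_le_of_norm_hasDerivWithin_le
    (f := v) (f' := deriv v) (s := Set.uIcc (0:ℝ) h)
    (fun x _ => (hd x).hasDerivAt.hasDerivWithinAt) key (convex_uIcc 0 h)
    Set.left_mem_uIcc Set.right_mem_uIcc
  rw [h0, sub_zero, sub_zero] at this
  calc ‖v h‖ ≤ |C| * |h| ^ k * ‖h‖ := this
    _ = |C| * ‖h ^ (k+1)‖ := by
        rw [norm_pow, Real.norm_eq_abs, pow_succ]; ring

lemma aux_deriv_eq_zero {V : Type*} [NormedAddCommGroup V] [NormedSpace ℝ V]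
    {v : ℝ → V} {D : V} (hv : HasDerivAt v D 0) (h0 : v 0 = 0)
    (hO : v =O[nhds 0] fun h => h ^ 2) : D = 0 := by
  have h1 : Tendsto (slope v 0) (nhdsWithin 0 {(0:ℝ)}ᶜ) (nhds D) :=
    hasDerivAt_iff_tendsto_slope.1 hv
  have h2 : Tendsto (slope v 0) (nhdsWithin 0 {(0:ℝ)}ᶜ) (nhds 0) := by
    rw [isBigO_iff] at hO
    obtain ⟨C, hC⟩ := hO
    apply squeeze_zero_norm' (a := fun h : ℝ => |C| * |h|)
    · filter_upwards [nhdsWithin_le_nhds hC] with h hh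
      rw [slope_def_module, h0, sub_zero, sub_zero, norm_smul]
      calc ‖h⁻¹‖ * ‖v h‖ ≤ ‖h⁻¹‖ * (|C| * ‖h^2‖) := by
            apply mul_le_mul_of_nonneg_left _ (norm_nonneg _)
            exact le_trans hh (mul_le_mul_of_nonneg_right (le_abs_self C) (norm_nonneg _))
        _ ≤ |C| * |h| := by
            rcases eq_or_ne h 0 with rfl | hne
            · simp
            · have hz : |h| ≠ 0 := abs_ne_zero.2 hne
              rw [norm_inv, Real.norm_eq_abs, norm_pow, Real.norm_eq_abs, sq]
              rw [show |h|⁻¹ * (|C| * (|h| * |h|)) = |C| * |h| by field_simp]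
    · have : Tendsto (fun h : ℝ => |C| * |h|) (nhds 0) (nhds (|C| * |0|)) := by
        exact (continuous_const.mul continuous_abs).tendsto 0
      simpa using this.mono_left nhdsWithin_le_nhds
  exact tendsto_nhds_unique h1 h2

lemma aux_key {E : Type*} [NormedAddCommGroup E] [NormedSpace ℝ E]
    {Φ : ℝ → E → E}
    (hΦ : ContDiff ℝ ∞ (fun z : ℝ × E => Φ z.1 z.2))
    (hΦ0 : ∀ z, Φ 0 z = z) (y : E)
    (hsym : ∀ h : ℝ, Φ h (Φ (-h) y) = y) :
    deriv (deriv (fun s => Φ s y)) 0 =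
      fderiv ℝ (fun z => fderiv ℝ (fun w : ℝ × E => Φ w.1 w.2) (0, z) (1, 0)) y
        (fderiv ℝ (fun w : ℝ × E => Φ w.1 w.2) (0, y) (1, 0)) := by
  have h1le : (∞ : WithTop ℕ∞) ≠ 0 := by simp
  have hs1 : (∞ : WithTop ℕ∞) + 1 ≤ ∞ := by exact_mod_cast le_top
  set F : ℝ × E → E := fun z => Φ z.1 z.2 with hF_def
  set A : E → E := fun z => fderiv ℝ F (0, z) (1, 0) with hA_def
  have hFd : Differentiable ℝ F := hΦ.differentiable h1le
  -- the two-parameter map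
  set H : ℝ × ℝ → E := fun p => F (p.1, F (p.2, y)) with hH_def
  have hH : ContDiff ℝ ∞ H :=
    hΦ.comp (contDiff_fst.prodMk (hΦ.comp (contDiff_snd.prodMk contDiff_const)))
  have hHd : Differentiable ℝ H := hH.differentiable h1le
  have hH1 : ContDiff ℝ ∞ (fderiv ℝ H) := hH.fderiv_right hs1
  set T := fderiv ℝ (fderiv ℝ H) (0, 0) with hT_def
  have hTd : HasFDerivAt (fderiv ℝ H) T (0, 0) :=
    ((hH1.differentiable h1le) (0, 0)).hasFDerivAt
  -- first- and second-level directional derivatives along curves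
  have lvl1 : ∀ (u : ℝ → ℝ × ℝ) (c : ℝ × ℝ) (r : ℝ), HasDerivAt u c r →
      HasDerivAt (fun s => H (u s)) (fderiv ℝ H (u r) c) r := fun u c r hu =>
    (hHd (u r)).hasFDerivAt.comp_hasDerivAt r hu
  have lvl2 : ∀ (u : ℝ → ℝ × ℝ) (c w : ℝ × ℝ) (r : ℝ), HasDerivAt u c r → u r = (0, 0) →
      HasDerivAt (fun s => fderiv ℝ H (u s) w) (T c w) r := by
    intro u c w r hu hur
    have hev : HasFDerivAt (fun p => fderiv ℝ H p w)
        ((ContinuousLinearMap.apply ℝ E w).comp T) (u r) := by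
      rw [hur]
      exact (ContinuousLinearMap.apply ℝ E w).hasFDerivAt.comp (0, 0) hTd
    exact hev.comp_hasDerivAt r hu
  -- curves
  have hc1 : ∀ s : ℝ, HasDerivAt (fun s : ℝ => (s, (0 : ℝ))) ((1 : ℝ), (0 : ℝ)) s :=
    fun s => (hasDerivAt_id s).prodMk (hasDerivAt_const s 0)
  have hc2 : ∀ t : ℝ, HasDerivAt (fun t : ℝ => ((0 : ℝ), t)) ((0 : ℝ), (1 : ℝ)) t :=
    fun t => (hasDerivAt_const t 0).prodMk (hasDerivAt_id t)
  have hc3 : ∀ r : ℝ, HasDerivAt (fun r : ℝ => (r, -r)) ((1 : ℝ), (-1 : ℝ)) r :=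
    fun r => (hasDerivAt_id r).prodMk (hasDerivAt_id r).neg
  -- partial derivative of F in the first variable
  have hAz : ∀ (z : E) (s : ℝ),
      HasDerivAt (fun s => F (s, z)) (fderiv ℝ F (s, z) (1, 0)) s := fun z s =>
    by have := (hFd (s, z)).hasFDerivAt.comp_hasDerivAt s ((hasDerivAt_id' s).prodMk (hasDerivAt_const s z)); exact this
  -- Fact A : second derivative along the first coordinate
  have hHs0 : (fun s => F (s, y)) = fun s => H (s, 0) := by
    funext s; rw [hH_def]; simp only [hF_def, hΦ0]
  have hd1 : deriv (fun s => F (s, y)) = fun s => fderiv ℝ H (s, 0) ((1 : ℝ), (0 : ℝ)) := by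
    rw [hHs0]; funext s
    exact (lvl1 (fun s => (s, 0)) (1, 0) s (hc1 s)).deriv
  have hq1 : deriv (deriv (fun s => F (s, y))) 0 = T (1, 0) (1, 0) := by
    rw [hd1]
    exact (lvl2 (fun s => (s, 0)) (1, 0) (1, 0) 0 (hc1 0) rfl).deriv
  -- Fact B : second derivative along the second coordinate
  have hHt0 : (fun t => F (t, y)) = fun t => H (0, t) := by
    funext t; rw [hH_def]; simp only [hF_def, hΦ0]
  have hd2 : deriv (fun s => F (s, y)) = fun t => fderiv ℝ H (0, t) ((0 : ℝ), (1 : ℝ)) := by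
    rw [hHt0]; funext t
    exact (lvl1 (fun t => (0, t)) (0, 1) t (hc2 t)).deriv
  have hq2 : deriv (deriv (fun s => F (s, y))) 0 = T (0, 1) (0, 1) := by
    rw [hd2]
    exact (lvl2 (fun t => (0, t)) (0, 1) (0, 1) 0 (hc2 0) rfl).deriv
  -- Fact C : the antidiagonal direction is flat
  have hconst : (fun r : ℝ => H (r, -r)) = fun _ => y := by
    funext r; rw [hH_def]; simp only [hF_def]; exact hsym r
  have hfd3 : ∀ r : ℝ, fderiv ℝ H (r, -r) ((1 : ℝ), (-1 : ℝ)) = 0 := by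
    intro r
    have h1 := lvl1 (fun r => (r, -r)) (1, -1) r (hc3 r)
    rw [hconst] at h1
    exact h1.unique (hasDerivAt_const r y)
  have hq3 : T ((1 : ℝ), (-1 : ℝ)) ((1 : ℝ), (-1 : ℝ)) = 0 := by
    have h2 := lvl2 (fun r => (r, -r)) (1, -1) (1, -1) 0 (hc3 0) (by norm_num)
    have h3 : (fun r : ℝ => fderiv ℝ H (r, -r) ((1 : ℝ), (-1 : ℝ))) = fun _ => (0 : E) :=
      funext fun r => hfd3 r
    rw [h3] at h2
    exact (h2.unique (hasDerivAt_const 0 0))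
  -- Fact D : mixed second derivative
  have hD1 : ∀ t : ℝ, fderiv ℝ H (0, t) ((1 : ℝ), (0 : ℝ)) = A (F (t, y)) := by
    intro t
    have h1 : HasDerivAt (fun s => H (s, t)) (fderiv ℝ H (0, t) (1, 0)) 0 :=
      lvl1 (fun s => (s, t)) (1, 0) 0 ((hasDerivAt_id 0).prodMk (hasDerivAt_const 0 t))
    have h2 : HasDerivAt (fun s => F (s, F (t, y))) (A (F (t, y))) 0 := hAz (F (t, y)) 0
    exact h1.unique h2
  have hD2 : HasDerivAt (fun t => fderiv ℝ H (0, t) ((1 : ℝ), (0 : ℝ)))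
      (T (0, 1) (1, 0)) 0 := lvl2 (fun t => (0, t)) (0, 1) (1, 0) 0 (hc2 0) rfl
  have hA : ContDiff ℝ ∞ A := by
    rw [hA_def]
    exact ((hΦ.fderiv_right hs1).comp (contDiff_const.prodMk contDiff_id)).clm_apply contDiff_const
  have hFty : HasDerivAt (fun t => F (t, y)) (A y) 0 := hAz y 0
  have hD3 : HasDerivAt (fun t => A (F (t, y))) (fderiv ℝ A y (A y)) 0 := by
    have hAy : HasFDerivAt A (fderiv ℝ A y) (F (0, y)) := by
      have : F (0, y) = y := by simp only [hF_def, hΦ0]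
      rw [this]
      exact ((hA.differentiable h1le) y).hasFDerivAt
    exact hAy.comp_hasDerivAt 0 hFty
  have hq4 : T (0, 1) (1, 0) = fderiv ℝ A y (A y) := by
    have h5 : (fun t => fderiv ℝ H (0, t) ((1 : ℝ), (0 : ℝ))) = fun t => A (F (t, y)) :=
      funext hD1
    rw [h5] at hD2
    exact hD2.unique hD3
  -- symmetry of the second derivative
  have hq5 : T (1, 0) (0, 1) = T (0, 1) (1, 0) :=
    second_derivative_symmetric (fun p => (hHd p).hasFDerivAt) hTd (1, 0) (0, 1)
  -- bilinear expansion
  have h11 : ((1 : ℝ), (-1 : ℝ)) = ((1 : ℝ), (0 : ℝ)) - ((0 : ℝ), (1 : ℝ)) := by norm_num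
  have hexp : T ((1 : ℝ), (-1 : ℝ)) ((1 : ℝ), (-1 : ℝ))
      = T (1, 0) (1, 0) - T (1, 0) (0, 1) - T (0, 1) (1, 0) + T (0, 1) (0, 1) := by
    rw [h11]
    simp only [map_sub, ContinuousLinearMap.sub_apply]
    abel
  -- conclude
  have hsum : deriv (deriv (fun s => F (s, y))) 0 + deriv (deriv (fun s => F (s, y))) 0
      = fderiv ℝ A y (A y) + fderiv ℝ A y (A y) := by
    have h0 : (0 : E) = T (1, 0) (1, 0) - T (1, 0) (0, 1) - T (0, 1) (1, 0) + T (0, 1) (0, 1) := by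
      rw [← hexp, hq3]
    rw [← hq1, ← hq2, hq5, hq4] at h0
    have h0' : deriv (deriv (fun s => F (s, y))) 0 + deriv (deriv (fun s => F (s, y))) 0
        - (fderiv ℝ A y (A y) + fderiv ℝ A y (A y)) = 0 := by
      have h := h0.symm
      abel_nf at h ⊢
      exact h
    exact sub_eq_zero.mp h0'
  have h2S : (2 : ℝ) • deriv (deriv (fun s => F (s, y))) 0 = (2 : ℝ) • fderiv ℝ A y (A y) := by
    rw [two_smul, two_smul]; exact hsum
  exact smul_right_injective E (two_ne_zero) h2S

/-- a symmetric, first-order consistent one-step method has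
(at least) order two: if `Φ₀ = id`, `Φ_h ∘ Φ_{-h} = id`, and the local error
is `O(h²)`, then the local error is in fact `O(h³)`. -/
theorem symmetric_method_has_even_order
    {d : ℕ}
    (f : (Fin d → ℝ) → (Fin d → ℝ)) (hf : ContDiff ℝ (⊤ : ℕ∞) f)
    -- the exact flow
    (φ : ℝ → (Fin d → ℝ) → (Fin d → ℝ))
    (hφsmooth : ContDiff ℝ (⊤ : ℕ∞) (fun z : ℝ × (Fin d → ℝ) => φ z.1 z.2))
    (hφ0 : ∀ y, φ 0 y = y)
    (hφflow : ∀ h y, HasDerivAt (fun s => φ s y) (f (φ h y)) h)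
    -- the one-step method
    (Φ : ℝ → (Fin d → ℝ) → (Fin d → ℝ))
    (hΦsmooth : ContDiff ℝ (⊤ : ℕ∞) (fun z : ℝ × (Fin d → ℝ) => Φ z.1 z.2))
    (hΦ0 : ∀ y, Φ 0 y = y)
    -- symmetry: `Φ_h ∘ Φ_{-h} = id` for all `h`
    (hsym : ∀ h y, Φ h (Φ (-h) y) = y)
    -- first-order consistency: local error `O(h²)`
    (hcons : ∀ y, (fun h : ℝ => Φ h y - φ h y) =O[nhds 0] fun h => h^2) :
    ∀ y, (fun h : ℝ => Φ h y - φ h y) =O[nhds 0] fun h => h^3 := by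
  intro y
  have h1le : (∞ : WithTop ℕ∞) ≠ 0 := by simp
  have hPhiInf : ContDiff ℝ ∞ (fun z : ℝ × (Fin d → ℝ) => Φ z.1 z.2) := hΦsmooth.of_le (by simp)
  have hphiInf : ContDiff ℝ ∞ (fun z : ℝ × (Fin d → ℝ) => φ z.1 z.2) := hφsmooth.of_le (by simp)
  have hf' : Differentiable ℝ f := (hf.of_le (by simp)).differentiable h1le
  have hΦz : ∀ z, ContDiff ℝ ∞ (fun h : ℝ => Φ h z) := fun z =>
    hPhiInf.comp (contDiff_id.prodMk contDiff_const)
  have hφz : ∀ z, ContDiff ℝ ∞ (fun h : ℝ => φ h z) := fun z =>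
    hphiInf.comp (contDiff_id.prodMk contDiff_const)
  have hderiv_smooth : ∀ {u : ℝ → Fin d → ℝ}, ContDiff ℝ ∞ u → ContDiff ℝ ∞ (deriv u) :=
    fun hu => ((contDiff_succ_iff_deriv (n := ∞)).1 (by exact_mod_cast hu)).2.2
  -- definition of `A`, the derivative of the method at `h = 0`
  set A : (Fin d → ℝ) → (Fin d → ℝ) :=
    fun z => fderiv ℝ (fun w : ℝ × (Fin d → ℝ) => Φ w.1 w.2) (0, z) (1, 0) with hA_def
  have hAz : ∀ z, HasDerivAt (fun s => Φ s z) (A z) 0 := fun z =>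
    by have := ((hPhiInf.differentiable h1le) ((0:ℝ), z)).hasFDerivAt.comp_hasDerivAt (0:ℝ)
           ((hasDerivAt_id' (0:ℝ)).prodMk (hasDerivAt_const (0:ℝ) z)); exact this
  have hφz0 : ∀ z, HasDerivAt (fun s => φ s z) (f z) 0 := fun z => by
    have := hφflow 0 z; rwa [hφ0 z] at this
  have hEz : ∀ z, HasDerivAt (fun h => Φ h z - φ h z) (A z - f z) 0 := fun z =>
    (hAz z).sub (hφz0 z)
  -- first-order consistency forces `A = f`
  have hAf : A = f := by
    funext z
    have h0 : (fun h : ℝ => Φ h z - φ h z) 0 = 0 := by simp [hΦ0 z, hφ0 z]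
    exact sub_eq_zero.mp (aux_deriv_eq_zero (hEz z) h0 (hcons z))
  -- the symmetry identity for the second derivative of the method
  have hkey : deriv (deriv (fun s => Φ s y)) 0 = fderiv ℝ f y (f y) := by
    have h : deriv (deriv (fun s => Φ s y)) 0 = fderiv ℝ A y (A y) :=
      aux_key hPhiInf hΦ0 y (fun h => hsym h y)
    rwa [hAf] at h
  -- the second derivative of the exact flow
  have hφkey : deriv (deriv (fun s => φ s y)) 0 = fderiv ℝ f y (f y) := by
    have hφd : deriv (fun s => φ s y) = fun h => f (φ h y) :=
      funext fun h => (hφflow h y).deriv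
    rw [hφd]
    have h2 : HasFDerivAt f (fderiv ℝ f y) (φ 0 y) := by
      rw [hφ0]; exact (hf' y).hasFDerivAt
    have h3 := h2.comp_hasDerivAt 0 (hφflow 0 y)
    rw [hφ0] at h3
    exact h3.deriv
  -- the error function and its derivatives at `0`
  have hE : ContDiff ℝ ∞ (fun h : ℝ => Φ h y - φ h y) := (hΦz y).sub (hφz y)
  have hE0' : deriv (fun h : ℝ => Φ h y - φ h y) 0 = 0 := by
    rw [(hEz y).deriv, hAf, sub_self]
  have hddE0 : deriv (deriv (fun h : ℝ => Φ h y - φ h y)) 0 = 0 := by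
    have hdE : deriv (fun h : ℝ => Φ h y - φ h y)
        = fun h => deriv (fun s => Φ s y) h - deriv (fun s => φ s y) h := by
      funext h
      exact deriv_sub ((hΦz y).differentiable h1le h) ((hφz y).differentiable h1le h)
    rw [hdE, deriv_fun_sub ((hderiv_smooth (hΦz y)).differentiable h1le 0)
      ((hderiv_smooth (hφz y)).differentiable h1le 0)]
    rw [show deriv (fun h => deriv (fun s => Φ s y) h) 0 = deriv (deriv (fun s => Φ s y)) 0 from rfl,
      show deriv (fun h => deriv (fun s => φ s y) h) 0 = deriv (deriv (fun s => φ s y)) 0 from rfl,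
      hkey, hφkey, sub_self]
  -- now bootstrap the `O(h³)` bound
  have hO1 : deriv (deriv (fun h : ℝ => Φ h y - φ h y)) =O[nhds 0] (fun h : ℝ => h ^ 1) := by
    apply aux_isBigO_succ
      (fun x => (hderiv_smooth (hderiv_smooth hE)).differentiable h1le x) hddE0
    have hc : Continuous (deriv (deriv (deriv (fun h : ℝ => Φ h y - φ h y)))) :=
      (hderiv_smooth (hderiv_smooth (hderiv_smooth hE))).continuous
    have h4 := (hc.tendsto 0).isBigO_one ℝ
    have h5 : (fun h : ℝ => h ^ 0) = fun _ : ℝ => (1 : ℝ) := by funext h; rw [pow_zero]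
    rw [h5]
    simpa using h4
  have hO2 : deriv (fun h : ℝ => Φ h y - φ h y) =O[nhds 0] (fun h : ℝ => h ^ 2) :=
    aux_isBigO_succ (fun x => (hderiv_smooth hE).differentiable h1le x) hE0' hO1
  exact aux_isBigO_succ (fun x => hE.differentiable h1le x) (by simp [hΦ0, hφ0]) hO2
end
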